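/- Let f : {0,1}^n → {0,1} be any Boolean function, let U_n be the uniform distribution on {0,1}^n, and for i ∈ [n] let U^{[i]} be the uniform distribution on {x ∈ {0,1}^n : x_i = 1}. Then E_{i ← [n]}[ ‖f(U_n) − f(U^{[i]})‖ ] ≤ O(1/√n), where f(D) denotes the pushforward distribution of D under f. Concretely, E_{i←[n]} |Pr_{x∼U_n}[f(x)=1] − Pr_{x∼U^{[i]}}[f(x)=1]| ≤ 2/√n. -/

import Mathlib

/-!
Write `g = 1_{f = 1}` and `χ_i(x) = (-1)^{x_i}`. Since `U^{[i]}` is `U_n` conditioned on `χ_i = -1`,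
the `i`-th difference `Pr_{U_n}[f = 1] - Pr_{U^{[i]}}[f = 1]` is exactly the degree-one Fourier
coefficient `ĝ(i) = E[g χ_i]`. The characters `χ_i` are orthonormal, so Bessel's inequality gives
`∑ ĝ(i)² ≤ E[g²] ≤ 1`, and Cauchy–Schwarz gives `∑ |ĝ(i)| ≤ √n`; averaging over `i` yields the bound
`1/√n`.
-/

open Finset

namespace BooleanCube

variable {ι : Type*}

def walsh (i : ι) (x : ι → Bool) : ℝ := if x i then -1 else 1

lemma walsh_mul_self (i : ι) (x : ι → Bool) : walsh i x * walsh i x = 1 := by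
  unfold walsh; split_ifs <;> norm_num

variable [Fintype ι] [DecidableEq ι]

noncomputable def walshCoeff (g : (ι → Bool) → ℝ) (i : ι) : ℝ :=
  (∑ x, g x * walsh i x) / 2 ^ Fintype.card ι

lemma sum_walsh_mul_walsh (i j : ι) :
    ∑ x : ι → Bool, walsh i x * walsh j x = if i = j then 2 ^ Fintype.card ι else 0 := by
  split_ifs with hij
  · subst hij
    simp [walsh_mul_self]
  -- flipping the `i`-th bit negates `walsh i` and fixes `walsh j`
  refine sum_involution (fun x _ => Function.update x i !(x i)) (fun x _ => ?_)
    (fun x _ _ hx => ?_) (fun _ _ => mem_univ _) (fun x _ => by simp)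
  · rw [walsh, walsh, walsh, walsh, Function.update_of_ne (Ne.symm hij)]
    cases x i <;> cases x j <;> norm_num
  · simpa using congrFun hx i

noncomputable def walshVec (i : ι) : EuclideanSpace ℝ (ι → Bool) :=
  (√(2 ^ Fintype.card ι))⁻¹ • WithLp.toLp 2 (walsh i)

lemma inner_walshVec (i : ι) (g : (ι → Bool) → ℝ) :
    inner ℝ (walshVec i) (WithLp.toLp 2 g) = √(2 ^ Fintype.card ι) * walshCoeff g i := by
  rw [walshVec, real_inner_smul_left, PiLp.inner_apply, walshCoeff]
  simp only [Real.inner_apply, mul_comm (walsh i _)]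
  field_simp
  rw [Real.sq_sqrt (by positivity)]

lemma orthonormal_walshVec : Orthonormal ℝ (walshVec (ι := ι)) := by
  rw [orthonormal_iff_ite]
  intro i j
  rw [walshVec, walshVec, real_inner_smul_left, real_inner_smul_right, PiLp.inner_apply]
  simp only [Real.inner_apply, sum_walsh_mul_walsh, ← mul_assoc, ← sq, inv_pow]
  rw [Real.sq_sqrt (by positivity)]
  split_ifs <;> simp

theorem sum_sq_walshCoeff_le (g : (ι → Bool) → ℝ) :
    ∑ i, walshCoeff g i ^ 2 ≤ (∑ x, g x ^ 2) / 2 ^ Fintype.card ι := by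
  have hbessel := orthonormal_walshVec.sum_inner_products_le (WithLp.toLp 2 g) (s := univ)
  simp only [inner_walshVec, EuclideanSpace.norm_eq, Real.norm_eq_abs, sq_abs] at hbessel
  rw [Real.sq_sqrt (sum_nonneg fun _ _ => sq_nonneg _)] at hbessel
  rw [le_div_iff₀ (by positivity), sum_mul]
  refine (sum_congr rfl fun i _ => ?_).trans_le hbessel
  rw [mul_pow, Real.sq_sqrt (by positivity), mul_comm]

theorem sum_sq_walshCoeff_le_one {g : (ι → Bool) → ℝ} (hg : ∀ x, g x ^ 2 ≤ 1) :
    ∑ i, walshCoeff g i ^ 2 ≤ 1 := by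
  refine (sum_sq_walshCoeff_le g).trans (div_le_one_of_le₀ ?_ (by positivity))
  calc ∑ x, g x ^ 2 ≤ ∑ _x : ι → Bool, (1 : ℝ) := sum_le_sum fun x _ => hg x
    _ = 2 ^ Fintype.card ι := by simp

lemma sum_div_sub_sum_filter_div_eq_walshCoeff (g : (ι → Bool) → ℝ) (i : ι) :
    (∑ x, g x) / 2 ^ Fintype.card ι - (∑ x with x i = true, g x) / 2 ^ (Fintype.card ι - 1) =
      walshCoeff g i := by
  have hcard : (2 : ℝ) ^ Fintype.card ι = 2 ^ (Fintype.card ι - 1) * 2 := by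
    rw [← pow_succ, Nat.sub_add_cancel (Fintype.card_pos_iff.mpr ⟨i⟩)]
  have hsplit : ∑ x, g x * walsh i x = ∑ x, g x - 2 * ∑ x with x i = true, g x := by
    rw [sum_filter, mul_sum, ← sum_sub_distrib]
    refine sum_congr rfl fun x _ => ?_
    rw [walsh]
    split_ifs <;> ring
  rw [walshCoeff, hsplit, hcard]
  field_simp

end BooleanCube

lemma Finset.sum_abs_le_sqrt_card_mul_sum_sq {α : Type*} (s : Finset α) (a : α → ℝ) :
    ∑ i ∈ s, |a i| ≤ √(#s * ∑ i ∈ s, a i ^ 2) := by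
  rw [Real.le_sqrt (sum_nonneg fun _ _ => abs_nonneg _) (by positivity)]
  simpa only [sq_abs] using sq_sum_le_card_mul_sum_sq (s := s) (f := fun i => |a i|)

open BooleanCube in
theorem stmt1 (n : ℕ) (f : (Fin n → Bool) → Bool) :
    (1 / (n : ℝ)) * ∑ i : Fin n,
      |(∑ x : Fin n → Bool, if f x then (1:ℝ) else 0) / 2 ^ n -
        (∑ x ∈ Finset.univ.filter (fun x : Fin n → Bool => x i = true),
          if f x then (1:ℝ) else 0) / 2 ^ (n - 1)|
      ≤ 2 / Real.sqrt n := by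
  set g : (Fin n → Bool) → ℝ := fun x => if f x then 1 else 0
  have hg (x : Fin n → Bool) : g x ^ 2 ≤ 1 := by by_cases h : f x <;> simp [g, h]
  have hdiff (i : Fin n) := sum_div_sub_sum_filter_div_eq_walshCoeff g i
  simp only [Fintype.card_fin] at hdiff
  calc 1 / (n : ℝ) * ∑ i, |(∑ x, g x) / 2 ^ n - (∑ x with x i = true, g x) / 2 ^ (n - 1)|
      = 1 / n * ∑ i, |walshCoeff g i| := by simp only [hdiff]
    _ ≤ 1 / n * √n := by
        gcongr
        calc ∑ i, |walshCoeff g i| ≤ √(n * ∑ i, walshCoeff g i ^ 2) := by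
              simpa using sum_abs_le_sqrt_card_mul_sum_sq univ (walshCoeff g)
          _ ≤ √n := by
              gcongr
              exact mul_le_of_le_one_right n.cast_nonneg (sum_sq_walshCoeff_le_one hg)
    _ = 1 / √n := by rw [one_div_mul_eq_div, Real.sqrt_div_self']
    _ ≤ 2 / √n := by gcongr; norm_num
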